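/- arXiv:1206.5349 — 5 statements merged into one kernel-verified Lean document; each statement's English description precedes it below -/
import Mathlib

section
/- Denoising Lemma: if y = Ax + η where x is uniform on {-1,1}^n and η is an independent mean-zero Gaussian vector with covariance Σ, then P(u) := -κ4(u^T y) = 2 \sum_{i=1}^n (u^T A)_i^4 for every u ∈ R^n; in particular P(u) does not depend on Σ. -/
open MeasureTheory ProbabilityTheory

/-!
The fourth cumulant `κ₄ X = E[X⁴] - 3 E[X²]²` of a centred variable is additive over independent
centred summands and homogeneous of degree four. A Gaussian is `2`-stable (`G₁ + G₂ ∼ √2 G` for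
independent copies), so `2 κ₄ G = 4 κ₄ G` and `κ₄` vanishes on every centred Gaussian. Hence
`κ₄ (uᵀ y) = κ₄ (∑ᵢ wᵢ xᵢ)` with `w = uᵀA`, and conditioning on one sign at a time gives
`E[(∑ᵢ wᵢ xᵢ)²] = ∑ᵢ wᵢ²` and `E[(∑ᵢ wᵢ xᵢ)⁴] = 3 (∑ᵢ wᵢ²)² - 2 ∑ᵢ wᵢ⁴`.
-/

open Finset

lemma MeasureTheory.MemLp.integrable_pow_of_le {Ω : Type*} [MeasurableSpace Ω] {μ : Measure Ω}
    [IsFiniteMeasure μ] {X : Ω → ℝ} {n k : ℕ} (hX : MemLp X n μ) (hk : k ≤ n) :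
    Integrable (fun ω => X ω ^ k) μ := by
  have hXk : MemLp X k μ := hX.mono_exponent (by exact_mod_cast hk)
  refine (integrable_norm_iff (hX.1.pow k)).1 ?_
  simpa only [Pi.pow_apply, norm_pow] using hXk.integrable_norm_pow'

lemma PMF.integral_uniformOfFintype {α : Type*} [Fintype α] [Nonempty α] [MeasurableSpace α]
    [MeasurableSingletonClass α] (f : α → ℝ) :
    ∫ a, f a ∂(PMF.uniformOfFintype α).toMeasure = (Fintype.card α : ℝ)⁻¹ * ∑ a, f a := by
  simp [PMF.integral_eq_sum, mul_sum]

namespace ProbabilityTheory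

variable {Ω : Type*} [MeasurableSpace Ω] {μ : Measure Ω}

theorem IndepFun.integral_add_pow [IsFiniteMeasure μ] {X Y : Ω → ℝ} (hXY : IndepFun X Y μ)
    {n : ℕ} (hX : MemLp X n μ) (hY : MemLp Y n μ) :
    ∫ ω, (X ω + Y ω) ^ n ∂μ =
      ∑ k ∈ range (n + 1), (∫ ω, X ω ^ k ∂μ) * (∫ ω, Y ω ^ (n - k) ∂μ) * n.choose k := by
  have hpow : ∀ k ∈ range (n + 1), IndepFun (fun ω => X ω ^ k) (fun ω => Y ω ^ (n - k)) μ :=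
    fun k _ => hXY.comp (measurable_id.pow_const k) (measurable_id.pow_const (n - k))
  simp_rw [add_pow]
  rw [integral_finsetSum _ fun k hk => ?_]
  swap
  · exact ((hpow k hk).integrable_mul (hX.integrable_pow_of_le (mem_range_succ_iff.1 hk))
      (hY.integrable_pow_of_le (n.sub_le k))).mul_const _
  refine sum_congr rfl fun k hk => ?_
  rw [integral_mul_const, (hpow k hk).integral_fun_mul_eq_mul_integral
    (hX.1.pow k) (hY.1.pow (n - k))]

/-- This is the fourth cumulant `κ₄ X` only when `X` is centred. -/
noncomputable def fourthCumulant (X : Ω → ℝ) (μ : Measure Ω) : ℝ :=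
  ∫ ω, X ω ^ 4 ∂μ - 3 * (∫ ω, X ω ^ 2 ∂μ) ^ 2

lemma fourthCumulant_const_mul (c : ℝ) (X : Ω → ℝ) :
    fourthCumulant (fun ω => c * X ω) μ = c ^ 4 * fourthCumulant X μ := by
  simp only [fourthCumulant, mul_pow, integral_const_mul]
  ring

theorem IndepFun.fourthCumulant_add [IsProbabilityMeasure μ] {X Y : Ω → ℝ}
    (hXY : IndepFun X Y μ) (hX : MemLp X 4 μ) (hY : MemLp Y 4 μ)
    (hX₀ : ∫ ω, X ω ∂μ = 0) (hY₀ : ∫ ω, Y ω ∂μ = 0) :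
    fourthCumulant (fun ω => X ω + Y ω) μ = fourthCumulant X μ + fourthCumulant Y μ := by
  have h4 := hXY.integral_add_pow (n := 4) (by exact_mod_cast hX) (by exact_mod_cast hY)
  have h2 := hXY.integral_add_pow (n := 2) (hX.mono_exponent (by norm_num))
    (hY.mono_exponent (by norm_num))
  simp only [fourthCumulant, h4, h2]
  simp only [sum_range_succ, range_one, sum_singleton, pow_zero, pow_one, integral_const,
    probReal_univ, smul_eq_mul, mul_one, one_mul, tsub_zero, tsub_self, Nat.choose, Nat.cast_one,
    Nat.cast_ofNat, Nat.reduceAdd, Nat.reduceSub, Nat.add_one_sub_one, hX₀, hY₀, zero_mul,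
    mul_zero, add_zero]
  ring

section Law

variable {𝓧 : Type*} [MeasurableSpace 𝓧] {ν : Measure 𝓧} {X : Ω → 𝓧}

lemma HasLaw.memLp_comp {E : Type*} [NormedAddCommGroup E] {p : ENNReal} (hX : HasLaw X ν μ)
    {f : 𝓧 → E} (hf : MemLp f p ν) : MemLp (fun ω => f (X ω)) p μ := by
  rw [← hX.map_eq] at hf
  exact (memLp_map_measure_iff hf.1 hX.aemeasurable).1 hf

lemma HasLaw.fourthCumulant_comp (hX : HasLaw X ν μ) {f : 𝓧 → ℝ}
    (hf : AEStronglyMeasurable f ν) : fourthCumulant (fun ω => f (X ω)) μ = fourthCumulant f ν := by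
  have h4 := hX.integral_comp (hf.pow 4)
  have h2 := hX.integral_comp (hf.pow 2)
  simp only [Function.comp_def, Pi.pow_apply] at h4 h2
  simp only [fourthCumulant, h4, h2]

lemma HasLaw.fourthCumulant_eq {X : Ω → ℝ} {ν : Measure ℝ} (hX : HasLaw X ν μ) :
    fourthCumulant X μ = fourthCumulant (fun x => x) ν :=
  hX.fourthCumulant_comp (f := fun x => x) (by fun_prop)

end Law

theorem fourthCumulant_gaussianReal (v : NNReal) :
    fourthCumulant (fun x => x) (gaussianReal 0 v) = 0 := by
  let P := (gaussianReal 0 v).prod (gaussianReal 0 v)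
  have hfst : HasLaw (fun z : ℝ × ℝ => z.1) (gaussianReal 0 v) P := ⟨by fun_prop, by simp [P]⟩
  have hsnd : HasLaw (fun z : ℝ × ℝ => z.2) (gaussianReal 0 v) P := ⟨by fun_prop, by simp [P]⟩
  have hind : IndepFun (fun z : ℝ × ℝ => z.1) (fun z => z.2) P :=
    indepFun_prod measurable_id measurable_id
  have hsum : HasLaw (fun z : ℝ × ℝ => z.1 + z.2) (gaussianReal 0 (v + v)) P := by
    refine ⟨by fun_prop, ?_⟩
    have := gaussianReal_add_gaussianReal_of_indepFun hind hfst.map_eq hsnd.map_eq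
    rwa [zero_add] at this
  have hscale : HasLaw (fun x => √2 * x) (gaussianReal 0 (v + v)) (gaussianReal 0 v) := by
    refine ⟨by fun_prop, ?_⟩
    rw [gaussianReal_map_const_mul, mul_zero]
    congr 1
    ext
    simp [two_mul]
  have hκ₂ : fourthCumulant (fun z : ℝ × ℝ => z.1 + z.2) P =
      2 * fourthCumulant (fun x => x) (gaussianReal 0 v) := by
    rw [hind.fourthCumulant_add (hfst.memLp_comp (memLp_id_gaussianReal 4))
      (hsnd.memLp_comp (memLp_id_gaussianReal 4)) (by simp [hfst.integral_eq])
      (by simp [hsnd.integral_eq]), hfst.fourthCumulant_eq, hsnd.fourthCumulant_eq]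
    ring
  have hκ₄ : fourthCumulant (fun z : ℝ × ℝ => z.1 + z.2) P =
      4 * fourthCumulant (fun x => x) (gaussianReal 0 v) := by
    rw [hsum.fourthCumulant_eq, ← hscale.fourthCumulant_eq, fourthCumulant_const_mul,
      show √2 ^ 4 = (4 : ℝ) by
        rw [show 4 = 2 * 2 from rfl, pow_mul, Real.sq_sqrt zero_le_two]; norm_num]
  linarith

noncomputable def rademacherSum {n : ℕ} (w : Fin n → ℝ) (b : Fin n → Bool) : ℝ :=
  ∑ i, w i * if b i then 1 else -1

lemma sum_rademacherSum_succ {n : ℕ} (w : Fin (n + 1) → ℝ) (f : ℝ → ℝ) :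
    ∑ b, f (rademacherSum w b) =
      ∑ b, (f (rademacherSum (Fin.tail w) b + w 0) + f (rademacherSum (Fin.tail w) b - w 0)) := by
  rw [← (Fin.consEquiv fun _ => Bool).sum_comp, Fintype.sum_prod_type, Fintype.sum_bool,
    ← sum_add_distrib]
  refine sum_congr rfl fun b _ => ?_
  simp [rademacherSum, Fin.sum_univ_succ, Fin.consEquiv, Fin.tail, sub_eq_add_neg, add_comm]

lemma sum_rademacherSum {n : ℕ} (w : Fin n → ℝ) : ∑ b, rademacherSum w b = 0 := by
  induction n with
  | zero => simp [rademacherSum]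
  | succ n ih =>
    calc ∑ b, rademacherSum w b
        = ∑ b, (rademacherSum (Fin.tail w) b + w 0 + (rademacherSum (Fin.tail w) b - w 0)) :=
          sum_rademacherSum_succ w fun x => x
      _ = 2 * ∑ b, rademacherSum (Fin.tail w) b := by rw [mul_sum]; congr! 1; ring
      _ = 0 := by rw [ih, mul_zero]

lemma sum_rademacherSum_sq {n : ℕ} (w : Fin n → ℝ) :
    ∑ b, rademacherSum w b ^ 2 = 2 ^ n * ∑ i, w i ^ 2 := by
  induction n with
  | zero => simp [rademacherSum]
  | succ n ih =>
    have key (S a : ℝ) : (S + a) ^ 2 + (S - a) ^ 2 = 2 * S ^ 2 + 2 * a ^ 2 := by ring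
    rw [sum_rademacherSum_succ w (· ^ 2)]
    simp only [key, sum_add_distrib, ← mul_sum, ih, sum_const, card_univ, Fintype.card_fun,
      Fintype.card_bool, Fintype.card_fin, Fin.sum_univ_succ (f := fun i => w i ^ 2), nsmul_eq_mul]
    push_cast
    simp only [Fin.tail]
    ring

lemma sum_rademacherSum_pow_four {n : ℕ} (w : Fin n → ℝ) :
    ∑ b, rademacherSum w b ^ 4 = 2 ^ n * (3 * (∑ i, w i ^ 2) ^ 2 - 2 * ∑ i, w i ^ 4) := by
  induction n with
  | zero => simp [rademacherSum]
  | succ n ih =>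
    have key (S a : ℝ) :
        (S + a) ^ 4 + (S - a) ^ 4 = 2 * S ^ 4 + 12 * a ^ 2 * S ^ 2 + 2 * a ^ 4 := by ring
    rw [sum_rademacherSum_succ w (· ^ 4)]
    simp only [key, sum_add_distrib, ← mul_sum, ih, sum_rademacherSum_sq, sum_const, card_univ,
      Fintype.card_fun, Fintype.card_bool, Fintype.card_fin, Fin.sum_univ_succ (f := fun i => w i ^ 2),
      Fin.sum_univ_succ (f := fun i => w i ^ 4), nsmul_eq_mul]
    push_cast
    simp only [Fin.tail]
    ring

lemma integral_rademacherSum {n : ℕ} (w : Fin n → ℝ) :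
    ∫ b, rademacherSum w b ∂(PMF.uniformOfFintype (Fin n → Bool)).toMeasure = 0 := by
  rw [PMF.integral_uniformOfFintype, sum_rademacherSum, mul_zero]

lemma fourthCumulant_rademacherSum {n : ℕ} (w : Fin n → ℝ) :
    fourthCumulant (rademacherSum w) (PMF.uniformOfFintype (Fin n → Bool)).toMeasure =
      -2 * ∑ i, w i ^ 4 := by
  simp only [fourthCumulant, PMF.integral_uniformOfFintype, sum_rademacherSum_sq,
    sum_rademacherSum_pow_four, Fintype.card_fun, Fintype.card_bool, Fintype.card_fin]
  push_cast
  field_simp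
  ring

end ProbabilityTheory

/-- Denoising Lemma: if `y = Ax + η` where `x` is uniform on `{-1,1}^n`
(encoded by a uniformly distributed sign pattern `s`) and `η` is an independent
mean-zero Gaussian vector with covariance `Σ` (every one-dimensional projection
`u ⬝ η` is Gaussian with variance `uᵀΣu`), then
`P(u) := -κ₄(uᵀ y) = 2 ∑ i (uᵀA)_i^4`; in particular it does not depend on `Σ`. -/
theorem denoising_lemma
    {Ω : Type*} [MeasurableSpace Ω] (μ : Measure Ω) [IsProbabilityMeasure μ]
    (n : ℕ) (A Sig : Matrix (Fin n) (Fin n) ℝ)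
    (s : Ω → Fin n → Bool) (η : Ω → Fin n → ℝ)
    (hs : Measure.map s μ = (PMF.uniformOfFintype (Fin n → Bool)).toMeasure)
    (hη : ∀ w : Fin n → ℝ,
      Measure.map (fun ω => ∑ i, w i * η ω i) μ =
        gaussianReal 0 (Real.toNNReal (dotProduct w (Sig.mulVec w))))
    (hind : IndepFun s η μ)
    (u : Fin n → ℝ)
    (x : Ω → Fin n → ℝ) (hx : x = fun ω i => if s ω i then (1 : ℝ) else -1)
    (y : Ω → Fin n → ℝ) (hy : y = fun ω => A.mulVec (x ω) + η ω) :
    -((∫ ω, (∑ i, u i * y ω i) ^ 4 ∂μ)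
        - 3 * (∫ ω, (∑ i, u i * y ω i) ^ 2 ∂μ) ^ 2)
      = 2 * ∑ i, Matrix.vecMul u A i ^ 4 := by
  set w := Matrix.vecMul u A
  set R : Ω → ℝ := fun ω => rademacherSum w (s ω)
  set G : Ω → ℝ := fun ω => ∑ i, u i * η ω i
  have hproj : (fun ω => ∑ i, u i * y ω i) = fun ω => R ω + G ω := by
    ext ω
    simp only [hy, hx, Pi.add_apply, mul_add, sum_add_distrib, R, G]
    congr 1
    exact Matrix.dotProduct_mulVec u A _
  have hsLaw : HasLaw s (PMF.uniformOfFintype (Fin n → Bool)).toMeasure μ :=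
    ⟨.of_map_ne_zero (by simp [hs, NeZero.ne]), hs⟩
  have hGLaw : HasLaw G (gaussianReal 0 (dotProduct u (Sig.mulVec u)).toNNReal) μ :=
    ⟨.of_map_ne_zero (by simp [G, hη u, NeZero.ne]), hη u⟩
  have hRG : IndepFun R G μ :=
    hind.comp (φ := rademacherSum w) (ψ := fun z : Fin n → ℝ => ∑ i, u i * z i)
      (measurable_of_countable _) (by fun_prop)
  have hR₀ : ∫ ω, R ω ∂μ = 0 := by
    rw [← integral_rademacherSum w]
    exact hsLaw.integral_comp (f := rademacherSum w) .of_discrete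
  have hG₀ : ∫ ω, G ω ∂μ = 0 := by rw [hGLaw.integral_eq, integral_id_gaussianReal]
  change -fourthCumulant (fun ω => ∑ i, u i * y ω i) μ = _
  rw [hproj, hRG.fourthCumulant_add (hsLaw.memLp_comp .of_discrete)
    (hGLaw.memLp_comp (f := fun x => x) (memLp_id_gaussianReal 4)) hR₀ hG₀,
    hsLaw.fourthCumulant_comp .of_discrete, hGLaw.fourthCumulant_eq,
    fourthCumulant_rademacherSum, fourthCumulant_gaussianReal]
  ring
end

section
/- Critical points of the quartic on the sphere: a unit vector v is a local maximum of f(v) = \sum_{i=1}^n d_i v_i^4 (with all d_i > 0) on the unit sphere only if v = ±e_i for some standard basis vector e_i; conversely every ±e_i is a local maximum. -/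
/-!
Near `±eᵢ` the off-diagonal mass `s = 1 - vᵢ²` is small, and on the sphere
`f ≤ dᵢ (1 - s)² + O(s²) = dᵢ - 2 dᵢ s + O(s²) ≤ dᵢ = f(±eᵢ)`.
Conversely, if `vᵢ` and `vⱼ` are both nonzero, move squared mass `t` from coordinate `j` to
coordinate `i` (keeping signs); this stays on the sphere and changes `f` by
`2t (dᵢvᵢ² - dⱼvⱼ²) + (dᵢ + dⱼ) t²`, which is positive for small `t > 0` once the
indices are ordered so that `dⱼvⱼ² ≤ dᵢvᵢ²`.
-/

open Filter Finset Metric Topology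

noncomputable section

variable {ι : Type*}

section weightedQuartic

variable [Fintype ι] [DecidableEq ι]

def weightedQuartic (d : ι → ℝ) (w : EuclideanSpace ℝ ι) : ℝ := ∑ k, d k * w k ^ 4

theorem weightedQuartic_le_of_mem_sphere (d : ι → ℝ) {w : EuclideanSpace ℝ ι}
    (hw : ‖w‖ = 1) (i : ι) (hs : (d i + ∑ k, |d k|) * (1 - w i ^ 2) ≤ 2 * d i) :
    weightedQuartic d w ≤ d i := by
  set s := 1 - w i ^ 2
  have hsum : w i ^ 2 + ∑ k ∈ univ.erase i, w k ^ 2 = 1 := by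
    rw [add_sum_erase univ (fun k => w k ^ 2) (mem_univ i), ← EuclideanSpace.real_norm_sq_eq, hw,
      one_pow]
  have hs₀ : 0 ≤ s := by
    have := sum_nonneg fun k (_ : k ∈ univ.erase i) => sq_nonneg (w k)
    linarith
  have hoff : ∑ k ∈ univ.erase i, d k * w k ^ 4 ≤ (∑ k, |d k|) * s ^ 2 := calc
    ∑ k ∈ univ.erase i, d k * w k ^ 4 ≤ ∑ k ∈ univ.erase i, |d k| * s ^ 2 := by
      refine sum_le_sum fun k hk => ?_
      have hk : w k ^ 2 ≤ s := by
        have := single_le_sum (fun k _ => sq_nonneg (w k)) hk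
        linarith
      calc d k * w k ^ 4 ≤ |d k| * (w k ^ 2) ^ 2 := by
            rw [← pow_mul]; exact mul_le_mul_of_nonneg_right (le_abs_self _) (by positivity)
        _ ≤ |d k| * s ^ 2 := by gcongr
    _ ≤ ∑ k, |d k| * s ^ 2 :=
      sum_le_sum_of_subset_of_nonneg (erase_subset _ _) fun k _ _ => by positivity
    _ = (∑ k, |d k|) * s ^ 2 := by rw [sum_mul]
  calc weightedQuartic d w = d i * (1 - s) ^ 2 + ∑ k ∈ univ.erase i, d k * w k ^ 4 := by
        rw [weightedQuartic, ← add_sum_erase _ _ (mem_univ i)]; ring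
    _ ≤ d i * (1 - s) ^ 2 + (∑ k, |d k|) * s ^ 2 := by gcongr
    _ ≤ d i := by nlinarith [mul_nonneg hs₀ (sub_nonneg.mpr hs)]

theorem isLocalMaxOn_weightedQuartic_single {d : ι → ℝ} {i : ι} (hdi : 0 < d i) {a : ℝ}
    (ha : |a| = 1) :
    IsLocalMaxOn (weightedQuartic d) (sphere 0 1) (EuclideanSpace.single i a) := by
  have ha2 : a ^ 2 = 1 := by rw [← sq_abs, ha, one_pow]
  have hval : weightedQuartic d (EuclideanSpace.single i a) = d i := by
    rw [weightedQuartic, sum_eq_single i (fun k _ hk => by simp [hk]) (by simp)]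
    simp [show a ^ 4 = (a ^ 2) ^ 2 by ring, ha2]
  have hlim : Tendsto (fun w : EuclideanSpace ℝ ι => (d i + ∑ k, |d k|) * (1 - w i ^ 2))
      (𝓝 (EuclideanSpace.single i a)) (𝓝 0) := by
    have : Continuous fun w : EuclideanSpace ℝ ι => (d i + ∑ k, |d k|) * (1 - w i ^ 2) := by
      fun_prop
    simpa [ha2] using this.tendsto (EuclideanSpace.single i a)
  have hsmall := hlim.eventually (gt_mem_nhds (by linarith : 0 < 2 * d i))
  filter_upwards [nhdsWithin_le_nhds hsmall, self_mem_nhdsWithin] with w hw hsph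
  rw [hval]
  exact weightedQuartic_le_of_mem_sphere d (mem_sphere_zero_iff_norm.mp hsph) i hw.le

end weightedQuartic

section transferMass

variable [DecidableEq ι] {v : EuclideanSpace ℝ ι} {i j k : ι} {t : ℝ}

def transferMass (v : EuclideanSpace ℝ ι) (i j : ι) (t : ℝ) : EuclideanSpace ℝ ι :=
  WithLp.toLp 2 fun k =>
    if k = i then v i * √(1 + t / v i ^ 2) else if k = j then v j * √(1 - t / v j ^ 2) else v k

theorem transferMass_zero (v : EuclideanSpace ℝ ι) (i j : ι) : transferMass v i j 0 = v := by
  ext k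
  simp only [transferMass, PiLp.toLp_apply, zero_div, add_zero, sub_zero, Real.sqrt_one, mul_one]
  split_ifs with hi hj
  · rw [hi]
  · rw [hj]
  · rfl

theorem continuous_transferMass (v : EuclideanSpace ℝ ι) (i j : ι) :
    Continuous (transferMass v i j) :=
  (PiLp.continuous_toLp 2 _).comp <| continuous_pi fun k => by split_ifs <;> fun_prop

theorem transferMass_apply_of_ne (hi : k ≠ i) (hj : k ≠ j) : transferMass v i j t k = v k := by
  simp [transferMass, hi, hj]

theorem transferMass_apply_left_sq (hvi : v i ≠ 0) (ht : 0 ≤ t) :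
    transferMass v i j t i ^ 2 = v i ^ 2 + t := by
  rw [transferMass, PiLp.toLp_apply, if_pos rfl, mul_pow, Real.sq_sqrt (by positivity)]
  field_simp

theorem transferMass_apply_right_sq (hij : i ≠ j) (hvj : v j ≠ 0) (ht : t ≤ v j ^ 2) :
    transferMass v i j t j ^ 2 = v j ^ 2 - t := by
  have hvj2 : 0 < v j ^ 2 := by positivity
  rw [transferMass, PiLp.toLp_apply, if_neg hij.symm, if_pos rfl, mul_pow,
    Real.sq_sqrt (sub_nonneg.mpr ((div_le_one hvj2).mpr ht))]
  field_simp

variable [Fintype ι]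

theorem norm_transferMass (hij : i ≠ j) (hvi : v i ≠ 0) (hvj : v j ≠ 0) (ht₀ : 0 ≤ t)
    (ht₁ : t ≤ v j ^ 2) : ‖transferMass v i j t‖ = ‖v‖ := by
  have hdiff : ∑ k, (transferMass v i j t k ^ 2 - v k ^ 2) = 0 := by
    rw [Fintype.sum_eq_add i j hij fun k hk => by
        rw [transferMass_apply_of_ne hk.1 hk.2, sub_self],
      transferMass_apply_left_sq hvi ht₀, transferMass_apply_right_sq hij hvj ht₁]
    ring
  rw [sum_sub_distrib] at hdiff
  rw [← sq_eq_sq₀ (norm_nonneg _) (norm_nonneg _), EuclideanSpace.real_norm_sq_eq,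
    EuclideanSpace.real_norm_sq_eq]
  linarith

theorem weightedQuartic_transferMass (d : ι → ℝ) (hij : i ≠ j) (hvi : v i ≠ 0)
    (hvj : v j ≠ 0) (ht₀ : 0 ≤ t) (ht₁ : t ≤ v j ^ 2) :
    weightedQuartic d (transferMass v i j t) =
      weightedQuartic d v + 2 * t * (d i * v i ^ 2 - d j * v j ^ 2) + (d i + d j) * t ^ 2 := by
  have hdiff : ∑ k, (d k * transferMass v i j t k ^ 4 - d k * v k ^ 4) =
      d i * ((v i ^ 2 + t) ^ 2 - (v i ^ 2) ^ 2) + d j * ((v j ^ 2 - t) ^ 2 - (v j ^ 2) ^ 2) := by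
    rw [Fintype.sum_eq_add i j hij fun k hk => by
      rw [transferMass_apply_of_ne hk.1 hk.2, sub_self]]
    simp only [pow_mul (transferMass v i j t _) 2 2, ← pow_mul (v _) 2 2,
      transferMass_apply_left_sq hvi ht₀, transferMass_apply_right_sq hij hvj ht₁]
    ring
  rw [sum_sub_distrib] at hdiff
  rw [weightedQuartic, weightedQuartic]
  linarith

theorem not_isLocalMaxOn_weightedQuartic_of_le {d : ι → ℝ} (hij : i ≠ j) (hvi : v i ≠ 0)
    (hvj : v j ≠ 0) (hd : 0 < d i + d j) (hle : d j * v j ^ 2 ≤ d i * v i ^ 2) :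
    ¬ IsLocalMaxOn (weightedQuartic d) (sphere 0 ‖v‖) v := by
  intro hmax
  have hsmall : ∀ᶠ t in 𝓝[>] (0 : ℝ), t ∈ Set.Ioo 0 (v j ^ 2) :=
    Ioo_mem_nhdsGT (by positivity)
  have hcurve : Tendsto (transferMass v i j) (𝓝[>] 0) (𝓝[sphere 0 ‖v‖] v) := by
    refine tendsto_nhdsWithin_iff.mpr ⟨?_, ?_⟩
    · exact ((continuous_transferMass v i j).tendsto' 0 v (transferMass_zero v i j)).mono_left
        nhdsWithin_le_nhds
    · filter_upwards [hsmall] with t ht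
      exact mem_sphere_zero_iff_norm.mpr (norm_transferMass hij hvi hvj ht.1.le ht.2.le)
  obtain ⟨t, ht, hft⟩ := (hsmall.and (hcurve.eventually hmax)).exists
  rw [weightedQuartic_transferMass d hij hvi hvj ht.1.le ht.2.le] at hft
  nlinarith [mul_nonneg ht.1.le (sub_nonneg.mpr hle), mul_pos hd (pow_pos ht.1 2)]

theorem not_isLocalMaxOn_weightedQuartic {d : ι → ℝ} (hij : i ≠ j) (hvi : v i ≠ 0)
    (hvj : v j ≠ 0) (hd : 0 < d i + d j) :
    ¬ IsLocalMaxOn (weightedQuartic d) (sphere 0 ‖v‖) v := by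
  rcases le_total (d j * v j ^ 2) (d i * v i ^ 2) with hle | hle
  · exact not_isLocalMaxOn_weightedQuartic_of_le hij hvi hvj hd hle
  · exact not_isLocalMaxOn_weightedQuartic_of_le hij.symm hvj hvi (by linarith) hle

end transferMass

variable [Fintype ι] [DecidableEq ι]

theorem eq_single_or_eq_neg_single_of_isLocalMaxOn {d : ι → ℝ} (hd : ∀ k, 0 < d k)
    {v : EuclideanSpace ℝ ι} (hv : ‖v‖ = 1)
    (hmax : IsLocalMaxOn (weightedQuartic d) (sphere 0 1) v) :
    ∃ i, v = EuclideanSpace.single i 1 ∨ v = -EuclideanSpace.single i 1 := by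
  obtain ⟨i, hvi⟩ : ∃ i, v i ≠ 0 := by
    by_contra! h
    have : v = 0 := by ext k; exact h k
    simp [this] at hv
  rw [← hv] at hmax
  have hv_eq : v = EuclideanSpace.single i (v i) := by
    ext k
    by_cases hk : k = i
    · simp [hk]
    · have hvk : v k = 0 := by
        by_contra hvk
        exact not_isLocalMaxOn_weightedQuartic hk hvk hvi (add_pos (hd k) (hd i)) hmax
      simp [hk, hvk]
  have habs : |v i| = 1 := calc
    |v i| = ‖EuclideanSpace.single i (v i)‖ := by simp
    _ = 1 := by rw [← hv_eq, hv]
  refine ⟨i, ?_⟩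
  rcases (abs_eq zero_le_one).mp habs with h | h
  · left; rw [hv_eq, h]
  · right; rw [hv_eq, h]; exact PiLp.single_neg 2 i

end

/-- Critical points of the quartic on the sphere: a unit vector `v` is a local
maximum of `f(v) = ∑ i d_i v_i^4` (all `d_i > 0`) on the unit sphere only if
`v = ±e_i` for some standard basis vector; conversely every `±e_i` is a local maximum. -/
theorem local_maxima_of_quartic_on_sphere
    (n : ℕ) (d : Fin n → ℝ) (hd : ∀ i, 0 < d i) :
    (∀ v : EuclideanSpace ℝ (Fin n), ‖v‖ = 1 →
        IsLocalMaxOn (fun w : EuclideanSpace ℝ (Fin n) => ∑ i, d i * w i ^ 4)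
          (Metric.sphere (0 : EuclideanSpace ℝ (Fin n)) 1) v →
        ∃ i, v = EuclideanSpace.single i (1 : ℝ) ∨ v = -EuclideanSpace.single i (1 : ℝ))
    ∧ (∀ i : Fin n,
        IsLocalMaxOn (fun w : EuclideanSpace ℝ (Fin n) => ∑ i, d i * w i ^ 4)
          (Metric.sphere (0 : EuclideanSpace ℝ (Fin n)) 1)
          (EuclideanSpace.single i (1 : ℝ))
        ∧ IsLocalMaxOn (fun w : EuclideanSpace ℝ (Fin n) => ∑ i, d i * w i ^ 4)
          (Metric.sphere (0 : EuclideanSpace ℝ (Fin n)) 1)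
          (-EuclideanSpace.single i (1 : ℝ))) := by
  refine ⟨fun v hv hmax => eq_single_or_eq_neg_single_of_isLocalMaxOn hd hv hmax,
    fun i => ⟨?_, ?_⟩⟩
  · exact isLocalMaxOn_weightedQuartic_single (hd i) abs_one
  · rw [← PiLp.single_neg 2 i]
    exact isLocalMaxOn_weightedQuartic_single (hd i) (by norm_num)
end

section
/- Coupling of orthogonal complements: let v*_1,…,v*_n be an orthonormal basis of R^n and v_1,…,v_k unit vectors with ||v_i - v*_i||_2 ≤ γ for i ≤ k, where γ < 0.01. Then for every unit vector v orthogonal to span{v_1,…,v_k}, the projection of v onto span{v*_{k+1},…,v*_n} has squared norm at least 1 - 4n γ^2. -/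
/-!
Expanding `w` in the orthonormal basis `v*`, the projection onto `span{v*_i | i ≥ k}` keeps exactly
the coefficients `⟪v*_i, w⟫` with `i ≥ k`, so by Parseval its squared norm is `1` minus the sum of
the first `k` squared coefficients. Each of those is at most `γ²`, because `w ⟂ v_i` gives
`⟪v*_i, w⟫ = -⟪v_i - v*_i, w⟫`. Hence the squared norm is at least `1 - kγ² ≥ 1 - 4nγ²`.
-/

open Submodule Finset
open scoped InnerProductSpace

section

variable {𝕜 E ι : Type*} [RCLike 𝕜] [NormedAddCommGroup E] [InnerProductSpace 𝕜 E]

theorem Orthonormal.starProjection_span_image {e : ι → E} (he : Orthonormal 𝕜 e) (s : Finset ι)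
    [(span 𝕜 (e '' s)).HasOrthogonalProjection] (x : E) :
    (span 𝕜 (e '' s)).starProjection x = ∑ i ∈ s, ⟪e i, x⟫_𝕜 • e i := by
  refine eq_starProjection_of_mem_of_inner_eq_zero
    (sum_mem fun i hi => smul_mem _ _ (subset_span ⟨i, hi, rfl⟩)) fun y hy => ?_
  refine (span_le (p := LinearMap.ker (innerₛₗ 𝕜 _)).2 ?_ hy : _)
  rintro _ ⟨i, hi, rfl⟩
  rw [SetLike.mem_coe, LinearMap.mem_ker, innerₛₗ_apply_apply, inner_sub_left,
    he.inner_left_sum _ (Finset.mem_coe.1 hi), inner_conj_symm, sub_self]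

theorem Orthonormal.sq_norm_starProjection_span_image {e : ι → E} (he : Orthonormal 𝕜 e)
    (s : Finset ι) [(span 𝕜 (e '' s)).HasOrthogonalProjection] (x : E) :
    ‖(span 𝕜 (e '' s)).starProjection x‖ ^ 2 = ∑ i ∈ s, ‖⟪e i, x⟫_𝕜‖ ^ 2 := by
  rw [he.starProjection_span_image]
  simpa using he.orthogonalFamily.norm_sum (fun i => ⟪e i, x⟫_𝕜) s

theorem OrthonormalBasis.sq_norm_starProjection_span_image_compl [Fintype ι] [DecidableEq ι]
    (b : OrthonormalBasis ι 𝕜 E) (s : Finset ι) [(span 𝕜 (b '' ↑sᶜ)).HasOrthogonalProjection]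
    (x : E) :
    ‖(span 𝕜 (b '' ↑sᶜ)).starProjection x‖ ^ 2 = ‖x‖ ^ 2 - ∑ i ∈ s, ‖⟪b i, x⟫_𝕜‖ ^ 2 := by
  rw [b.orthonormal.sq_norm_starProjection_span_image, ← b.sum_sq_norm_inner_right x,
    ← sum_add_sum_compl s, add_sub_cancel_left]

theorem norm_inner_le_norm_sub_mul_norm_of_inner_eq_zero {u e x : E} (h : ⟪u, x⟫_𝕜 = 0) :
    ‖⟪e, x⟫_𝕜‖ ≤ ‖u - e‖ * ‖x‖ :=
  calc ‖⟪e, x⟫_𝕜‖ = ‖⟪u - e, x⟫_𝕜‖ := by rw [inner_sub_left, h, zero_sub, norm_neg]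
    _ ≤ ‖u - e‖ * ‖x‖ := norm_inner_le_norm _ _

end

theorem coupling_orthogonal_complements_general
    (n k : ℕ) (hk : k ≤ n) (γ : ℝ)
    (vstar : Fin n → EuclideanSpace ℝ (Fin n)) (hON : Orthonormal ℝ vstar)
    (v : Fin k → EuclideanSpace ℝ (Fin n))
    (hclose : ∀ i : Fin k, ‖v i - vstar (Fin.castLE hk i)‖ ≤ γ)
    (w : EuclideanSpace ℝ (Fin n)) (hw : ‖w‖ = 1)
    (horth : ∀ i : Fin k, inner ℝ (v i) w = (0 : ℝ)) :
    1 - 4 * n * γ ^ 2 ≤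
      ‖(Submodule.orthogonalProjection
          (Submodule.span ℝ {x | ∃ i : Fin n, k ≤ (i : ℕ) ∧ x = vstar i}) w :
        EuclideanSpace ℝ (Fin n))‖ ^ 2 := by
  classical
  let b := OrthonormalBasis.mk hON
    (hON.linearIndependent.span_eq_top_of_card_eq_finrank' (by simp)).ge
  let S := univ.image (Fin.castLE hk)
  have hspan : {x | ∃ i : Fin n, k ≤ (i : ℕ) ∧ x = vstar i} = b '' ↑Sᶜ := by
    ext x
    simp [S, b, eq_comm]
  have hcoeff (j : Fin k) : ‖⟪vstar (Fin.castLE hk j), w⟫_ℝ‖ ≤ γ :=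
    calc _ ≤ ‖v j - vstar (Fin.castLE hk j)‖ * ‖w‖ :=
          norm_inner_le_norm_sub_mul_norm_of_inner_eq_zero (horth j)
      _ ≤ γ := by rw [hw, mul_one]; exact hclose j
  have hsmall : ∑ i ∈ S, ‖⟪b i, w⟫_ℝ‖ ^ 2 ≤ k * γ ^ 2 :=
    calc ∑ i ∈ S, ‖⟪b i, w⟫_ℝ‖ ^ 2 = ∑ j : Fin k, ‖⟪vstar (Fin.castLE hk j), w⟫_ℝ‖ ^ 2 := by
          rw [sum_image (Fin.castLE_injective hk).injOn]; simp [b]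
      _ ≤ ∑ _j : Fin k, γ ^ 2 := sum_le_sum fun j _ => pow_le_pow_left₀ (norm_nonneg _) (hcoeff j) 2
      _ = k * γ ^ 2 := by simp
  rw [hspan, ← starProjection_apply, b.sq_norm_starProjection_span_image_compl, hw]
  have hkn : (k : ℝ) ≤ n := by exact_mod_cast hk
  nlinarith [sq_nonneg γ]

/-- Coupling of orthogonal complements: let `v*_1,…,v*_n` be an orthonormal basis
of `ℝⁿ` and `v_1,…,v_k` unit vectors with `‖v_i - v*_i‖ ≤ γ < 0.01`. Then every unit
vector `w` orthogonal to `span{v_1,…,v_k}` has squared projection onto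
`span{v*_{k+1},…,v*_n}` at least `1 - 4nγ²`. -/
theorem coupling_orthogonal_complements
    (n k : ℕ) (hk : k ≤ n) (γ : ℝ) (hγ0 : 0 < γ) (hγ : γ < 0.01)
    (vstar : Fin n → EuclideanSpace ℝ (Fin n)) (hON : Orthonormal ℝ vstar)
    (v : Fin k → EuclideanSpace ℝ (Fin n)) (hunit : ∀ i, ‖v i‖ = 1)
    (hclose : ∀ i : Fin k, ‖v i - vstar (Fin.castLE hk i)‖ ≤ γ)
    (w : EuclideanSpace ℝ (Fin n)) (hw : ‖w‖ = 1)
    (horth : ∀ i : Fin k, inner ℝ (v i) w = (0 : ℝ)) :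
    1 - 4 * n * γ ^ 2 ≤
      ‖(Submodule.orthogonalProjection
          (Submodule.span ℝ {x | ∃ i : Fin n, k ≤ (i : ℕ) ∧ x = vstar i}) w :
        EuclideanSpace ℝ (Fin n))‖ ^ 2 :=
  coupling_orthogonal_complements_general n k hk γ vstar hON v hclose w hw horth
end

section
/- Existence of an aligned orthonormal basis: under the hypotheses of the coupling lemma (orthonormal v*_1,…,v*_n and unit v_1,…,v_k with ||v_i - v*_i|| ≤ γ, γ < 0.01), there exists an orthonormal basis v_{k+1},…,v_n of the orthogonal complement of span{v_1,…,v_k} such that for every unit vector w ∈ R^{n-k}, ||\sum_{i=1}^{n-k} w_i v_{k+i} - \sum_{i=1}^{n-k} w_i v*_{k+i}||_2 ≤ 3 √n γ. -/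
/-!
Let `W = span {v*_{k+i}}` and `Z = (span {v_i})ᗮ`, both of dimension `n - k`. A vector `x ∈ W`
is orthogonal to `v*_1, …, v*_k`, hence almost orthogonal to the `v_i`, and its component in
`span {v_i}` has norm at most `t ‖x‖` with `t = 2 √k γ`. Take a singular value decomposition
`P b_j = σ_j f_j` of the orthogonal projection `P : W → Z`, with orthonormal bases `b` of `W` and
`f` of `Z`. The isometry `U : b_j ↦ f_j` (the orthogonal factor in the polar decomposition of
`P`) satisfies `‖U x - x‖² = 2 ∑ ⟪b_j, x⟫² (1 - σ_j) ≤ 2 t² ‖x‖²`, because `1 - σ_j ≤ t²`.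
Then `u_i = U v*_{k+i}` works, as `2 √2 ≤ 3`.
-/

open Module Submodule
open scoped RealInnerProductSpace

section

variable {E : Type*} [NormedAddCommGroup E] [InnerProductSpace ℝ E]

theorem Orthonormal.norm_sum_smul_sq {ι : Type*} [Fintype ι] {e : ι → E} (he : Orthonormal ℝ e)
    (c : ι → ℝ) : ‖∑ i, c i • e i‖ ^ 2 = ∑ i, c i ^ 2 := by
  rw [← real_inner_self_eq_norm_sq, he.inner_sum c c Finset.univ]
  simp [sq]

theorem Orthonormal.sum_abs_le_sqrt_card_mul_norm {ι : Type*} [Fintype ι] {e : ι → E}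
    (he : Orthonormal ℝ e) (c : ι → ℝ) : ∑ i, |c i| ≤ √(Fintype.card ι) * ‖∑ i, c i • e i‖ := by
  rw [← Real.sqrt_sq (norm_nonneg (∑ i, c i • e i)), he.norm_sum_smul_sq,
    ← Real.sqrt_mul (Nat.cast_nonneg _)]
  refine Real.le_sqrt_of_sq_le ?_
  simpa [sq_abs] using sq_sum_le_card_mul_sum_sq (s := Finset.univ) (f := fun i => |c i|)

theorem one_sub_norm_starProjection_le_sq (K : Submodule ℝ E) [K.HasOrthogonalProjection]
    {x : E} (hx : ‖x‖ = 1) : 1 - ‖K.starProjection x‖ ≤ ‖x - K.starProjection x‖ ^ 2 := by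
  have hpyth := K.norm_sq_eq_add_norm_sq_starProjection x
  rw [starProjection_orthogonal_val, hx] at hpyth
  have hle : ‖K.starProjection x‖ ≤ 1 := hx ▸ K.norm_starProjection_apply_le x
  nlinarith [norm_nonneg (K.starProjection x)]

theorem exists_orthonormalBasis_smul_eq_of_pairwise_inner_eq_zero {F ι : Type*}
    [NormedAddCommGroup F] [InnerProductSpace ℝ F] [FiniteDimensional ℝ F] [Fintype ι]
    (hcard : finrank ℝ F = Fintype.card ι) {y : ι → F}
    (hy : Pairwise fun i j => ⟪y i, y j⟫ = 0) :
    ∃ f : OrthonormalBasis ι ℝ F, ∀ i, y i = ‖y i‖ • f i := by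
  classical
  set s : Set ι := {i | y i ≠ 0}
  have hs : Orthonormal ℝ (s.domRestrict fun i => ‖y i‖⁻¹ • y i) := by
    rw [orthonormal_iff_ite]
    rintro ⟨i, hi⟩ ⟨j, hj⟩
    simp only [Set.domRestrict_apply, real_inner_smul_left, real_inner_smul_right]
    by_cases hij : i = j
    · subst hij
      have : ‖y i‖ ≠ 0 := norm_ne_zero_iff.mpr hi
      rw [real_inner_self_eq_norm_sq, if_pos rfl]
      field_simp
    · rw [hy hij, if_neg (by simpa using hij)]
      ring
  obtain ⟨f, hf⟩ := hs.exists_orthonormalBasis_extension_of_card_eq hcard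
  refine ⟨f, fun i => ?_⟩
  by_cases hi : y i = 0
  · simp [hi]
  · rw [hf i hi, smul_inv_smul₀ (norm_ne_zero_iff.mpr hi)]

theorem exists_orthonormalBasis_orthogonalProjectionOnto_eq_smul (W Z : Submodule ℝ E)
    [FiniteDimensional ℝ W] [FiniteDimensional ℝ Z] {m : ℕ} (hW : finrank ℝ W = m)
    (hZ : finrank ℝ Z = m) :
    ∃ (b : OrthonormalBasis (Fin m) ℝ W) (f : OrthonormalBasis (Fin m) ℝ Z),
      ∀ j, Z.orthogonalProjectionOnto (b j : E) = ‖Z.orthogonalProjectionOnto (b j : E)‖ • f j := by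
  set T : W →ₗ[ℝ] Z := Z.orthogonalProjectionOnto.toLinearMap ∘ₗ W.subtype
  have hS := LinearMap.isSymmetric_adjoint_comp_self T
  set b := hS.eigenvectorBasis hW
  have horth : Pairwise fun i j => ⟪T (b i), T (b j)⟫ = 0 := by
    intro i j hij
    rw [← LinearMap.adjoint_inner_right, ← LinearMap.comp_apply,
      hS.apply_eigenvectorBasis, real_inner_smul_right, b.orthonormal.inner_eq_zero hij, mul_zero]
  obtain ⟨f, hf⟩ :=
    exists_orthonormalBasis_smul_eq_of_pairwise_inner_eq_zero
      (hZ.trans (Fintype.card_fin m).symm) horth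
  exact ⟨b, f, hf⟩

theorem OrthonormalBasis.norm_coe_equiv_sub_sq {W Z : Submodule ℝ E} [Z.HasOrthogonalProjection]
    {ι : Type*} [Fintype ι] (b : OrthonormalBasis ι ℝ W) (f : OrthonormalBasis ι ℝ Z) {σ : ι → ℝ}
    (hσ : ∀ j, Z.orthogonalProjectionOnto (b j : E) = σ j • f j) (x : W) :
    ‖(b.equiv f (.refl ι) x : E) - x‖ ^ 2 = 2 * ∑ j, ⟪b j, x⟫ ^ 2 * (1 - σ j) := by
  have hU : b.equiv f (.refl ι) x = ∑ j, ⟪b j, x⟫ • f j := by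
    simp [b.equiv_apply, b.repr_apply_apply]
  have hP : Z.orthogonalProjectionOnto (x : E) = ∑ j, (⟪b j, x⟫ * σ j) • f j := by
    conv_lhs => rw [← b.sum_repr' x]
    simp [map_sum, hσ, smul_smul]
  have hinner : ⟪(b.equiv f (.refl ι) x : E), (x : E)⟫ = ∑ j, ⟪b j, x⟫ ^ 2 * σ j := by
    rw [← inner_orthogonalProjectionOnto_eq_of_mem_left, hU, hP, f.orthonormal.inner_sum]
    simp [sq, mul_assoc]
  rw [norm_sub_sq_real, norm_coe, LinearIsometryEquiv.norm_map, hinner, norm_coe,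
    ← b.sum_sq_inner_right x, Finset.mul_sum, Finset.mul_sum, ← Finset.sum_sub_distrib,
    ← Finset.sum_add_distrib]
  refine Finset.sum_congr rfl fun j _ => by ring

theorem exists_linearIsometryEquiv_norm_coe_sub_le (W Z : Submodule ℝ E) [FiniteDimensional ℝ W]
    [FiniteDimensional ℝ Z] (hdim : finrank ℝ W = finrank ℝ Z) {t : ℝ} (ht0 : 0 ≤ t)
    (ht : ∀ x ∈ W, ‖x - Z.starProjection x‖ ≤ t * ‖x‖) :
    ∃ U : W ≃ₗᵢ[ℝ] Z, ∀ x : W, ‖(U x : E) - x‖ ≤ √2 * t * ‖x‖ := by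
  obtain ⟨b, f, hbf⟩ := exists_orthonormalBasis_orthogonalProjectionOnto_eq_smul W Z rfl hdim.symm
  refine ⟨b.equiv f (.refl _), fun x => ?_⟩
  have hσ : ∀ j, 1 - ‖Z.orthogonalProjectionOnto (b j : E)‖ ≤ t ^ 2 := fun j => by
    have hbj : ‖(b j : E)‖ = 1 := (norm_coe _).trans (b.orthonormal.norm_eq_one j)
    calc 1 - ‖Z.orthogonalProjectionOnto (b j : E)‖ ≤ ‖(b j : E) - Z.starProjection (b j)‖ ^ 2 :=
          one_sub_norm_starProjection_le_sq Z hbj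
      _ ≤ t ^ 2 := by
          gcongr
          simpa [hbj] using ht _ (b j).2
  have hsq : ‖(b.equiv f (.refl _) x : E) - x‖ ^ 2 ≤ (√2 * t * ‖x‖) ^ 2 := by
    calc ‖(b.equiv f (.refl _) x : E) - x‖ ^ 2
        = 2 * ∑ j, ⟪b j, x⟫ ^ 2 * (1 - ‖Z.orthogonalProjectionOnto (b j : E)‖) :=
          b.norm_coe_equiv_sub_sq f hbf x
      _ ≤ 2 * ∑ j, ⟪b j, x⟫ ^ 2 * t ^ 2 := by
          gcongr with j
          exact hσ j
      _ = (√2 * t * ‖x‖) ^ 2 := by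
          rw [mul_pow, mul_pow, Real.sq_sqrt zero_le_two, ← b.sum_sq_inner_right x,
            ← Finset.sum_mul]
          ring
  exact (pow_le_pow_iff_left₀ (norm_nonneg _) (by positivity) two_ne_zero).mp hsq

theorem exists_orthonormal_span_eq_norm_sum_sub_le {ι : Type*} [Fintype ι] {e : ι → E}
    (he : Orthonormal ℝ e) (Z : Submodule ℝ E) [FiniteDimensional ℝ Z]
    (hZ : finrank ℝ Z = Fintype.card ι) {t : ℝ} (ht0 : 0 ≤ t)
    (ht : ∀ x ∈ span ℝ (Set.range e), ‖x - Z.starProjection x‖ ≤ t * ‖x‖) :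
    ∃ u : ι → E, Orthonormal ℝ u ∧ span ℝ (Set.range u) = Z ∧
      ∀ w : ι → ℝ, ‖∑ i, w i • u i - ∑ i, w i • e i‖ ≤ √2 * t * √(∑ i, w i ^ 2) := by
  have := FiniteDimensional.span_of_finite ℝ (Set.finite_range e)
  have hW : finrank ℝ (span ℝ (Set.range e)) = Fintype.card ι :=
    finrank_span_eq_card he.linearIndependent
  obtain ⟨U, hU⟩ :=
    exists_linearIsometryEquiv_norm_coe_sub_le _ Z (hW.trans hZ.symm) ht0 fun x hx => ht x hx
  set ê : ι → span ℝ (Set.range e) := fun i => ⟨e i, subset_span (Set.mem_range_self i)⟩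
  set u : ι → E := fun i => U (ê i)
  have hu : Orthonormal ℝ u :=
    ((orthonormal_span he).comp_linearIsometryEquiv U).comp_linearIsometry Z.subtypeₗᵢ
  refine ⟨u, hu, ?_, fun w => ?_⟩
  · refine eq_of_le_of_finrank_eq (span_le.mpr ?_) ?_
    · rintro _ ⟨i, rfl⟩
      exact (U (ê i)).2
    · rw [finrank_span_eq_card hu.linearIndependent, hZ]
  · have hx : ((∑ i, w i • ê i : span ℝ (Set.range e)) : E) = ∑ i, w i • e i := by simp [ê]
    have hUx : ((U (∑ i, w i • ê i) : Z) : E) = ∑ i, w i • u i := by simp [u]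
    have hnorm : ‖∑ i, w i • e i‖ = √(∑ i, w i ^ 2) := by
      rw [← he.norm_sum_smul_sq, Real.sqrt_sq (norm_nonneg _)]
    simpa [hx, hUx, hnorm] using hU (∑ i, w i • ê i)

theorem Orthonormal.inner_eq_zero_of_mem_span_comp {ι κ : Type*} {e : ι → E}
    (he : Orthonormal ℝ e) {g : κ → ι} {j : ι} (hj : ∀ i, g i ≠ j) {x : E}
    (hx : x ∈ span ℝ (Set.range (e ∘ g))) : ⟪e j, x⟫ = 0 := by
  have hle : span ℝ (Set.range (e ∘ g)) ≤ (ℝ ∙ e j)ᗮ := by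
    refine span_le.mpr ?_
    rintro _ ⟨i, rfl⟩
    exact mem_orthogonal_singleton_iff_inner_right.mpr (he.inner_eq_zero (hj i).symm)
  exact mem_orthogonal_singleton_iff_inner_right.mp (hle hx)

theorem Orthonormal.norm_sum_smul_sub_le {ι : Type*} [Fintype ι] {e v : ι → E}
    (he : Orthonormal ℝ e) {γ : ℝ} (hγ : 0 ≤ γ) (hclose : ∀ i, ‖v i - e i‖ ≤ γ) (c : ι → ℝ) :
    ‖∑ i, c i • v i - ∑ i, c i • e i‖ ≤ √(Fintype.card ι) * γ * ‖∑ i, c i • e i‖ := by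
  calc ‖∑ i, c i • v i - ∑ i, c i • e i‖ = ‖∑ i, c i • (v i - e i)‖ := by
        simp_rw [smul_sub, Finset.sum_sub_distrib]
    _ ≤ ∑ i, ‖c i • (v i - e i)‖ := norm_sum_le _ _
    _ ≤ ∑ i, |c i| * γ := by
        gcongr with i
        rw [norm_smul, Real.norm_eq_abs]
        exact mul_le_mul_of_nonneg_left (hclose i) (abs_nonneg _)
    _ = (∑ i, |c i|) * γ := (Finset.sum_mul ..).symm
    _ ≤ (√(Fintype.card ι) * ‖∑ i, c i • e i‖) * γ := by
        gcongr
        exact he.sum_abs_le_sqrt_card_mul_norm c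
    _ = √(Fintype.card ι) * γ * ‖∑ i, c i • e i‖ := by ring

theorem norm_starProjection_span_le_of_forall_inner_eq_zero {ι : Type*} [Fintype ι]
    {e v : ι → E} (he : Orthonormal ℝ e) {γ : ℝ} (hγ : 0 ≤ γ) (hclose : ∀ i, ‖v i - e i‖ ≤ γ)
    [(span ℝ (Set.range v)).HasOrthogonalProjection] {x : E} (hx : ∀ i, ⟪e i, x⟫ = 0) :
    ‖(span ℝ (Set.range v)).starProjection x‖ ≤ 2 * √(Fintype.card ι) * γ * ‖x‖ := by
  set V := span ℝ (Set.range v)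
  set p := V.starProjection x
  set δ := √(Fintype.card ι) * γ
  rw [mul_assoc 2]
  rcases le_or_gt 1 (2 * δ) with hδ | hδ
  · calc ‖p‖ ≤ ‖x‖ := V.norm_starProjection_apply_le x
      _ ≤ 2 * δ * ‖x‖ := le_mul_of_one_le_left (norm_nonneg x) hδ
  -- With `p = ∑ c_i v_i` and `q = ∑ c_i e_i ⟂ x`: `‖p‖² = ⟪p - q, x⟫ ≤ δ ‖q‖ ‖x‖`, and
  -- `‖q‖ ≤ ‖p‖ + δ ‖q‖` gives `‖q‖ ≤ 2 ‖p‖`.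
  obtain ⟨c, hc⟩ := mem_span_range_iff_exists_fun ℝ |>.mp (V.starProjection_apply_mem x)
  set q := ∑ i, c i • e i
  have hd : ‖p - q‖ ≤ δ * ‖q‖ := by
    simpa only [p, ← hc] using he.norm_sum_smul_sub_le hγ hclose c
  have hqx : ⟪q, x⟫ = 0 := by simp [q, sum_inner, real_inner_smul_left, hx]
  have hpp : ‖p‖ ^ 2 = ⟪p - q, x⟫ := by
    have h := V.starProjection_inner_eq_zero x p (V.starProjection_apply_mem x)
    rw [inner_sub_left, real_inner_comm] at h
    rw [inner_sub_left, hqx, sub_zero, ← real_inner_self_eq_norm_sq]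
    linarith
  have hq : ‖q‖ ≤ 2 * ‖p‖ := by
    have := norm_sub_le p (p - q)
    rw [sub_sub_cancel] at this
    nlinarith [norm_nonneg q]
  have hp2 : ‖p‖ * ‖p‖ ≤ 2 * δ * ‖x‖ * ‖p‖ := by
    calc ‖p‖ * ‖p‖ = ⟪p - q, x⟫ := by rw [← sq, hpp]
      _ ≤ ‖p - q‖ * ‖x‖ := real_inner_le_norm _ _
      _ ≤ δ * ‖q‖ * ‖x‖ := by gcongr
      _ ≤ δ * (2 * ‖p‖) * ‖x‖ := by gcongr
      _ = 2 * δ * ‖x‖ * ‖p‖ := by ring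
  rcases (norm_nonneg p).eq_or_lt with h0 | hpos
  · rw [← h0]; positivity
  · exact le_of_mul_le_mul_right hp2 hpos

end

/-- Existence of an aligned orthonormal basis: given an orthonormal basis
`v*_1,…,v*_n` and linearly independent unit vectors `v_1,…,v_k` with
`‖v_i - v*_i‖ ≤ γ < 0.01`, there is an orthonormal basis `u_1,…,u_{n-k}` of the
orthogonal complement of `span{v_1,…,v_k}` such that for every unit
`w ∈ ℝ^{n-k}`, `‖∑ w_i u_i - ∑ w_i v*_{k+i}‖ ≤ 3 √n γ`. -/
theorem exists_aligned_orthonormal_basis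
    (n k : ℕ) (hk : k ≤ n) (γ : ℝ) (hγ0 : 0 < γ)
    (vstar : Fin n → EuclideanSpace ℝ (Fin n)) (hON : Orthonormal ℝ vstar)
    (v : Fin k → EuclideanSpace ℝ (Fin n)) (hli : LinearIndependent ℝ v)
    (hclose : ∀ i : Fin k, ‖v i - vstar (Fin.castLE hk i)‖ ≤ γ) :
    ∃ u : Fin (n - k) → EuclideanSpace ℝ (Fin n),
      Orthonormal ℝ u ∧
      Submodule.span ℝ (Set.range u) = (Submodule.span ℝ (Set.range v))ᗮ ∧
      ∀ w : Fin (n - k) → ℝ, Real.sqrt (∑ i, w i ^ 2) = 1 →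
        ‖(∑ i, w i • u i)
            - ∑ i : Fin (n - k), w i • vstar ⟨k + i, by have := i.isLt; omega⟩‖
          ≤ 3 * Real.sqrt n * γ := by
  set V := span ℝ (Set.range v)
  set tail : Fin (n - k) → Fin n := fun i => ⟨k + i, by have := i.isLt; omega⟩
  have htail : Function.Injective tail := fun i j h => by
    ext; simpa [tail] using congrArg Fin.val h
  have hZ : finrank ℝ Vᗮ = Fintype.card (Fin (n - k)) := by
    have := V.finrank_add_finrank_orthogonal
    rw [finrank_span_eq_card hli, finrank_euclideanSpace_fin, Fintype.card_fin] at this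
    rw [Fintype.card_fin]
    omega
  have hdefect : ∀ x ∈ span ℝ (Set.range (vstar ∘ tail)),
      ‖x - Vᗮ.starProjection x‖ ≤ 2 * √(k : ℝ) * γ * ‖x‖ := by
    intro x hx
    rw [starProjection_orthogonal_val, sub_sub_cancel]
    have := norm_starProjection_span_le_of_forall_inner_eq_zero
      (hON.comp _ (Fin.castLE_injective hk)) hγ0.le hclose (x := x) fun j =>
        hON.inner_eq_zero_of_mem_span_comp (fun i h => by
          simp only [tail, Fin.ext_iff, Fin.val_castLE] at h; omega) hx
    rwa [Fintype.card_fin] at this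
  obtain ⟨u, hu, hspan, hbound⟩ :=
    exists_orthonormal_span_eq_norm_sum_sub_le (hON.comp tail htail) Vᗮ hZ (by positivity) hdefect
  refine ⟨u, hu, hspan, fun w hw => (hbound w).trans ?_⟩
  have hsqrt2 : √2 ≤ 3 / 2 := by nlinarith [Real.sq_sqrt (zero_le_two (α := ℝ)), Real.sqrt_nonneg 2]
  rw [hw, mul_one]
  calc √2 * (2 * √(k : ℝ) * γ) ≤ 3 / 2 * (2 * √(k : ℝ) * γ) := by gcongr
    _ = 3 * √(k : ℝ) * γ := by ring
    _ ≤ 3 * √(n : ℝ) * γ := by gcongr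
end

section
/- Separation by quartic values: let f(u) = \sum_i d_i (u^T R_i)^4 where R is orthogonal and 0 < d_min ≤ d_i ≤ d_max. If a unit vector v satisfies |v^T R_i| > 1 - d_min/(100 d_max), then f(v) > f(u) for every unit vector u with |u^T R_i| ∈ [1 - d_min/(25 d_max), 1 - d_min/(50 d_max)]. -/
/-!
Write `b = uᵀR` and `c = vᵀR`, and `a = d_min / (100 d_max)`. Since `R` is orthogonal, `b` is again
a unit vector, so the coordinates of `b` other than `b_i` carry mass `1 - b_i² ≤ 8a` and contribute
at most `d_max (1 - b_i²)² ≤ 64 a² d_max` to `f(u)`. Meanwhile `f(v) ≥ d_i c_i⁴`, and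
`d_i (c_i⁴ - b_i⁴) ≥ d_min ((1 - a)⁴ - (1 - 2a)⁴) ≥ 3a d_min = 300 a² d_max`.
-/

open Matrix

theorem Matrix.dotProduct_vecMul_self_of_mul_transpose_eq_one {n R : Type*} [Fintype n]
    [DecidableEq n] [CommRing R] {M : Matrix n n R} (hM : M * Mᵀ = 1) (w : n → R) :
    w ᵥ* M ⬝ᵥ w ᵥ* M = w ⬝ᵥ w := by
  rw [← dotProduct_mulVec, ← mulVec_transpose, mulVec_mulVec, hM, one_mulVec]

theorem sum_sq_vecMul_of_mul_transpose_eq_one {n : Type*} [Fintype n] [DecidableEq n]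
    {M : Matrix n n ℝ} (hM : M * Mᵀ = 1) (w : n → ℝ) :
    ∑ j, (∑ l, w l * M l j) ^ 2 = ∑ j, w j ^ 2 := by
  simpa only [dotProduct, vecMul, sq] using dotProduct_vecMul_self_of_mul_transpose_eq_one hM w

theorem Finset.sum_mul_pow_four_le_mul_sq_sum_sq {ι : Type*} (s : Finset ι) {d b : ι → ℝ}
    {D : ℝ} (hD : 0 ≤ D) (hd : ∀ j ∈ s, d j ≤ D) :
    ∑ j ∈ s, d j * b j ^ 4 ≤ D * (∑ j ∈ s, b j ^ 2) ^ 2 :=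
  calc ∑ j ∈ s, d j * b j ^ 4
      ≤ ∑ j ∈ s, D * (b j ^ 2) ^ 2 :=
        Finset.sum_le_sum fun j hj => by
          rw [← pow_mul]
          exact mul_le_mul_of_nonneg_right (hd j hj) (by positivity)
    _ = D * ∑ j ∈ s, (b j ^ 2) ^ 2 := (Finset.mul_sum _ _ _).symm
    _ ≤ D * (∑ j ∈ s, b j ^ 2) ^ 2 :=
        mul_le_mul_of_nonneg_left
          (Finset.sum_sq_le_sq_sum_of_nonneg fun j _ => sq_nonneg _) hD

theorem sum_mul_pow_four_le_of_sum_sq_eq_one {ι : Type*} [Fintype ι] [DecidableEq ι]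
    {d b : ι → ℝ} {D : ℝ} (hD : 0 ≤ D) (hd : ∀ j, d j ≤ D) (hb : ∑ j, b j ^ 2 = 1) (i : ι) :
    ∑ j, d j * b j ^ 4 ≤ d i * b i ^ 4 + D * (1 - b i ^ 2) ^ 2 := by
  have hrest : ∑ j ∈ Finset.univ.erase i, b j ^ 2 = 1 - b i ^ 2 := by
    rw [← hb, ← Finset.add_sum_erase _ _ (Finset.mem_univ i), add_sub_cancel_left]
  rw [← Finset.add_sum_erase _ _ (Finset.mem_univ i), ← hrest]
  gcongr
  exact Finset.sum_mul_pow_four_le_mul_sq_sum_sq _ hD fun j _ => hd j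

theorem quartic_gap {a δ D x y : ℝ} (ha : 0 < a) (ha' : a ≤ 1 / 100) (hD : 0 < D)
    (hδ : 100 * a * D ≤ δ) (hx : 1 - a < x) (hy : 1 - 4 * a ≤ y) (hy' : y ≤ 1 - 2 * a) :
    δ * y ^ 4 + D * (1 - y ^ 2) ^ 2 < δ * x ^ 4 := by
  have hδ0 : 0 < δ := lt_of_lt_of_le (by positivity) hδ
  have hgain : 3 * a ≤ (1 - a) ^ 4 - (1 - 2 * a) ^ 4 := by
    have hfactor : (1 - a) ^ 4 - (1 - 2 * a) ^ 4
        = a * ((2 - 3 * a) * ((1 - a) ^ 2 + (1 - 2 * a) ^ 2)) := by ring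
    have hS : 19 / 10 ≤ (1 - a) ^ 2 + (1 - 2 * a) ^ 2 := by nlinarith
    rw [hfactor]
    nlinarith [mul_le_mul (by linarith : (197 / 100 : ℝ) ≤ 2 - 3 * a) hS (by norm_num) (by linarith)]
  have hloss : (1 - y ^ 2) ^ 2 ≤ 64 * a ^ 2 := by
    have hnonneg : 0 ≤ 1 - y ^ 2 := by nlinarith
    have hle : 1 - y ^ 2 ≤ 8 * a := by nlinarith
    nlinarith [pow_le_pow_left₀ hnonneg hle 2]
  calc δ * y ^ 4 + D * (1 - y ^ 2) ^ 2
      ≤ δ * (1 - 2 * a) ^ 4 + D * (64 * a ^ 2) := by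
        gcongr
        linarith
    _ < δ * (1 - 2 * a) ^ 4 + δ * (3 * a) := by
        have := mul_le_mul_of_nonneg_right hδ (by positivity : (0 : ℝ) ≤ 3 * a)
        nlinarith [mul_pos (mul_pos ha ha) hD]
    _ ≤ δ * (1 - a) ^ 4 := by linarith [mul_le_mul_of_nonneg_left hgain hδ0.le]
    _ < δ * x ^ 4 := by gcongr; linarith

theorem quartic_value_separation_general
    (n : ℕ) (dmin dmax : ℝ) (h0 : 0 < dmin) (hle : dmin ≤ dmax)
    (R : Matrix (Fin n) (Fin n) ℝ) (hR : R * R.transpose = 1)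
    (d : Fin n → ℝ) (hd : ∀ j, d j ∈ Set.Icc dmin dmax)
    (v u : Fin n → ℝ) (hu : ∑ j, u j ^ 2 = 1)
    (i : Fin n)
    (hvi : 1 - dmin / (100 * dmax) < |∑ j, v j * R j i|)
    (hui : |∑ j, u j * R j i| ∈
      Set.Icc (1 - dmin / (25 * dmax)) (1 - dmin / (50 * dmax))) :
    ∑ j, d j * (∑ l, u l * R l j) ^ 4 < ∑ j, d j * (∑ l, v l * R l j) ^ 4 := by
  have hdmax : 0 < dmax := h0.trans_le hle
  set a := dmin / (100 * dmax) with ha_def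
  have ha : 0 < a := by positivity
  have ha' : a ≤ 1 / 100 := by rw [div_le_iff₀ (by positivity)]; linarith
  have hδ : 100 * a * dmax ≤ d i := by
    rw [ha_def, mul_comm 100, mul_assoc, div_mul_cancel₀ _ (by positivity)]; exact (hd i).1
  have h25 : dmin / (25 * dmax) = 4 * a := by rw [ha_def]; ring
  have h50 : dmin / (50 * dmax) = 2 * a := by rw [ha_def]; ring
  rw [Set.mem_Icc, h25, h50] at hui
  have hb : ∑ j, (∑ l, u l * R l j) ^ 2 = 1 :=
    (sum_sq_vecMul_of_mul_transpose_eq_one hR u).trans hu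
  have heven : Even 4 := by decide
  calc ∑ j, d j * (∑ l, u l * R l j) ^ 4
      ≤ d i * |∑ l, u l * R l i| ^ 4 + dmax * (1 - |∑ l, u l * R l i| ^ 2) ^ 2 := by
        rw [heven.pow_abs, sq_abs]
        exact sum_mul_pow_four_le_of_sum_sq_eq_one hdmax.le (fun j => (hd j).2) hb i
    _ < d i * |∑ l, v l * R l i| ^ 4 := quartic_gap ha ha' hdmax hδ hvi hui.1 hui.2
    _ ≤ ∑ j, d j * (∑ l, v l * R l j) ^ 4 := by
        rw [heven.pow_abs]
        refine Finset.single_le_sum (f := fun j => d j * (∑ l, v l * R l j) ^ 4)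
          (fun j _ => ?_) (Finset.mem_univ i)
        have := h0.trans_le (hd j).1
        positivity

/-- Separation by quartic values: let `f(u) = ∑ j d_j (uᵀR_j)^4` with `R` orthogonal
and `0 < d_min ≤ d_j ≤ d_max`. If a unit vector `v` has `|vᵀR_i| > 1 - d_min/(100 d_max)`,
then `f(v) > f(u)` for every unit `u` with
`|uᵀR_i| ∈ [1 - d_min/(25 d_max), 1 - d_min/(50 d_max)]`. -/
theorem quartic_value_separation
    (n : ℕ) (dmin dmax : ℝ) (h0 : 0 < dmin) (hle : dmin ≤ dmax)
    (R : Matrix (Fin n) (Fin n) ℝ) (hR : R * R.transpose = 1)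
    (d : Fin n → ℝ) (hd : ∀ j, d j ∈ Set.Icc dmin dmax)
    (v u : Fin n → ℝ) (hv : ∑ j, v j ^ 2 = 1) (hu : ∑ j, u j ^ 2 = 1)
    (i : Fin n)
    (hvi : 1 - dmin / (100 * dmax) < |∑ j, v j * R j i|)
    (hui : |∑ j, u j * R j i| ∈
      Set.Icc (1 - dmin / (25 * dmax)) (1 - dmin / (50 * dmax))) :
    ∑ j, d j * (∑ l, u l * R l j) ^ 4 < ∑ j, d j * (∑ l, v l * R l j) ^ 4 :=
  quartic_value_separation_general n dmin dmax h0 hle R hR d hd v u hu i hvi hui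
end
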